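/- arXiv:math-ph/0409026 — 2 statements merged into one kernel-verified Lean document; each statement's English description precedes it below -/
import Mathlib

section
/- Let B(A_n, k) be the (n+1)×(n+1) matrix whose top-left n×n block has 2 on the diagonal and 1 off the diagonal, whose last row and column have exactly k entries equal to 1 (in positions 1..k, say) and the rest 0, and whose (n+1,n+1) entry is 2. Then det(B(A_n,k)) = 2(n+1) − k(n−k+1). -/
open Finset

private lemma sum_ite_lt' (n m : ℕ) (hm : m ≤ n + 1) :
    (∑ i : Fin (n+1), (if (i:ℕ) < m then (1:ℝ) else 0)) = m := by
  rw [Fin.sum_univ_eq_sum_range (fun i => if i < m then (1:ℝ) else 0),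
      ← Finset.sum_range_add_sum_Ico _ hm,
      Finset.sum_congr rfl (fun i hi => if_pos (Finset.mem_range.mp hi)),
      Finset.sum_congr rfl (fun i hi => if_neg (by have := (Finset.mem_Ico.mp hi).1; omega))]
  simp

private lemma sum_ite_eq_n' (n : ℕ) :
    (∑ i : Fin (n+1), (if (i:ℕ) = n then (1:ℝ) else 0)) = 1 := by
  rw [Fin.sum_univ_eq_sum_range (fun i => if i = n then (1:ℝ) else 0),
      ← Finset.sum_range_add_sum_Ico _ (Nat.le_succ n),
      Finset.sum_congr rfl (fun i hi => if_neg (by have := Finset.mem_range.mp hi; omega))]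
  simp


/-- `det B(A_n, k) = 2(n+1) − k(n−k+1)`, where `B(A_n,k)` is the `(n+1)×(n+1)` matrix
whose top-left `n×n` block has `2` on the diagonal and `1` off it, whose last row and
column have `1` in the first `k` positions and `0` in the rest, and whose bottom-right
entry is `2`. -/
theorem det_An_extension (n k : ℕ) (hk : k ≤ n) :
    (Matrix.of fun i j : Fin (n + 1) =>
        if i = j then (2 : ℝ)
        else if (i : ℕ) = n then (if (j : ℕ) < k then 1 else 0)
        else if (j : ℕ) = n then (if (i : ℕ) < k then 1 else 0)
        else 1).det = 2 * (n + 1) - k * ((n : ℝ) - k + 1) := by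
  set U : Matrix (Fin (n+1)) (Fin 3) ℝ := Matrix.of fun i =>
    ![if (i:ℕ) < n then 1 else 0, if (i:ℕ) < k then 1 else 0, if (i:ℕ) = n then 1 else 0]
    with hU
  set V : Matrix (Fin 3) (Fin (n+1)) ℝ := Matrix.of
    ![fun j => if (j:ℕ) < n then 1 else 0,
      fun j => if (j:ℕ) = n then 1 else 0,
      fun j => (if (j:ℕ) < k then 1 else 0) + (if (j:ℕ) = n then 1 else 0)] with hV
  have hM : (Matrix.of fun i j : Fin (n + 1) =>
        if i = j then (2 : ℝ)
        else if (i : ℕ) = n then (if (j : ℕ) < k then 1 else 0)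
        else if (j : ℕ) = n then (if (i : ℕ) < k then 1 else 0)
        else 1) = 1 + U * V := by
    ext i j
    have hi := i.isLt
    have hj := j.isLt
    simp only [Matrix.of_apply, Matrix.add_apply, Matrix.one_apply, Matrix.mul_apply,
      Fin.sum_univ_three, hU, hV, Matrix.cons_val_zero, Matrix.cons_val_one, Matrix.head_cons,
      Matrix.cons_val_two, Matrix.tail_cons]
    by_cases hij : i = j
    · subst hij
      simp only [if_pos rfl]
      split_ifs <;> first | omega | norm_num
    · have hne : (i:ℕ) ≠ (j:ℕ) := fun h => hij (Fin.ext h)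
      simp only [if_neg hij]
      split_ifs <;> first | omega | norm_num
  have e00 : (V * U) 0 0 = n := by
    simp only [Matrix.mul_apply, hU, hV, Matrix.of_apply, Matrix.cons_val_zero,
      Matrix.cons_val_one, Matrix.head_cons, Matrix.cons_val_two, Matrix.tail_cons]
    rw [Finset.sum_congr rfl (fun (x : Fin (n+1)) _ =>
      show (if (x:ℕ) < n then (1:ℝ) else 0) * (if (x:ℕ) < n then 1 else 0)
        = (if (x:ℕ) < n then 1 else 0) by split_ifs <;> ring)]
    exact sum_ite_lt' n n (Nat.le_succ n)
  have e01 : (V * U) 0 1 = k := by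
    simp only [Matrix.mul_apply, hU, hV, Matrix.of_apply, Matrix.cons_val_zero,
      Matrix.cons_val_one, Matrix.head_cons, Matrix.cons_val_two, Matrix.tail_cons]
    rw [Finset.sum_congr rfl (fun (x : Fin (n+1)) _ =>
      show (if (x:ℕ) < n then (1:ℝ) else 0) * (if (x:ℕ) < k then 1 else 0)
        = (if (x:ℕ) < k then 1 else 0) by split_ifs <;> first | omega | ring)]
    exact sum_ite_lt' n k (by omega)
  have e02 : (V * U) 0 2 = 0 := by
    simp only [Matrix.mul_apply, hU, hV, Matrix.of_apply, Matrix.cons_val_zero,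
      Matrix.cons_val_one, Matrix.head_cons, Matrix.cons_val_two, Matrix.tail_cons]
    rw [Finset.sum_congr rfl (fun (x : Fin (n+1)) _ =>
      show (if (x:ℕ) < n then (1:ℝ) else 0) * (if (x:ℕ) = n then 1 else 0)
        = 0 by split_ifs <;> first | omega | ring)]
    simp
  have e10 : (V * U) 1 0 = 0 := by
    simp only [Matrix.mul_apply, hU, hV, Matrix.of_apply, Matrix.cons_val_zero,
      Matrix.cons_val_one, Matrix.head_cons, Matrix.cons_val_two, Matrix.tail_cons]
    rw [Finset.sum_congr rfl (fun (x : Fin (n+1)) _ =>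
      show (if (x:ℕ) = n then (1:ℝ) else 0) * (if (x:ℕ) < n then 1 else 0)
        = 0 by split_ifs <;> first | omega | ring)]
    simp
  have e11 : (V * U) 1 1 = 0 := by
    simp only [Matrix.mul_apply, hU, hV, Matrix.of_apply, Matrix.cons_val_zero,
      Matrix.cons_val_one, Matrix.head_cons, Matrix.cons_val_two, Matrix.tail_cons]
    rw [Finset.sum_congr rfl (fun (x : Fin (n+1)) _ =>
      show (if (x:ℕ) = n then (1:ℝ) else 0) * (if (x:ℕ) < k then 1 else 0)
        = 0 by split_ifs <;> first | omega | ring)]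
    simp
  have e12 : (V * U) 1 2 = 1 := by
    simp only [Matrix.mul_apply, hU, hV, Matrix.of_apply, Matrix.cons_val_zero,
      Matrix.cons_val_one, Matrix.head_cons, Matrix.cons_val_two, Matrix.tail_cons]
    rw [Finset.sum_congr rfl (fun (x : Fin (n+1)) _ =>
      show (if (x:ℕ) = n then (1:ℝ) else 0) * (if (x:ℕ) = n then 1 else 0)
        = (if (x:ℕ) = n then 1 else 0) by split_ifs <;> ring)]
    exact sum_ite_eq_n' n
  have e20 : (V * U) 2 0 = k := by
    simp only [Matrix.mul_apply, hU, hV, Matrix.of_apply, Matrix.cons_val_zero,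
      Matrix.cons_val_one, Matrix.head_cons, Matrix.cons_val_two, Matrix.tail_cons]
    rw [Finset.sum_congr rfl (fun (x : Fin (n+1)) _ =>
      show ((if (x:ℕ) < k then (1:ℝ) else 0) + (if (x:ℕ) = n then 1 else 0))
          * (if (x:ℕ) < n then 1 else 0)
        = (if (x:ℕ) < k then 1 else 0) by split_ifs <;> first | omega | ring)]
    exact sum_ite_lt' n k (by omega)
  have e21 : (V * U) 2 1 = k := by
    simp only [Matrix.mul_apply, hU, hV, Matrix.of_apply, Matrix.cons_val_zero,
      Matrix.cons_val_one, Matrix.head_cons, Matrix.cons_val_two, Matrix.tail_cons]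
    rw [Finset.sum_congr rfl (fun (x : Fin (n+1)) _ =>
      show ((if (x:ℕ) < k then (1:ℝ) else 0) + (if (x:ℕ) = n then 1 else 0))
          * (if (x:ℕ) < k then 1 else 0)
        = (if (x:ℕ) < k then 1 else 0) by split_ifs <;> first | omega | ring)]
    exact sum_ite_lt' n k (by omega)
  have e22 : (V * U) 2 2 = 1 := by
    simp only [Matrix.mul_apply, hU, hV, Matrix.of_apply, Matrix.cons_val_zero,
      Matrix.cons_val_one, Matrix.head_cons, Matrix.cons_val_two, Matrix.tail_cons]
    rw [Finset.sum_congr rfl (fun (x : Fin (n+1)) _ =>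
      show ((if (x:ℕ) < k then (1:ℝ) else 0) + (if (x:ℕ) = n then 1 else 0))
          * (if (x:ℕ) = n then 1 else 0)
        = (if (x:ℕ) = n then 1 else 0) by split_ifs <;> first | omega | ring)]
    exact sum_ite_eq_n' n
  rw [hM, Matrix.det_one_add_mul_comm, Matrix.det_fin_three]
  simp only [Matrix.add_apply, Matrix.one_apply, e00, e01, e02, e10, e11, e12, e20, e21, e22]
  norm_num [Fin.ext_iff]
  ring
end

section
/- Suppose (u,v) ↦ (p−q, p+q) where p, q are nonnegative integers with p + q ≤ n and (p−q)² − (p+q)(n+1) + 2(n+1) = 0. Writing n+1 = a²b with b squarefree, any solution has u = p−q divisible by ab. The complete list of solutions with p > q is: p = q = 1 (any n); (p,q,n) = (3,0,8); (6,0,8); (4,0,7). -/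
/-!
Put `u = p - q` and `s = p + q`; the equation reads `u² = (s - 2)(n + 1)`. Hence `n + 1 = a²b`
divides `u²`, and since `b` is squarefree this forces `ab ∣ u`. For the list of solutions:
if `q > 0` then `0 ≤ u ≤ s - 2 < n + 1`, so `u² < (s - 2)(n + 1)` unless `s = 2`, i.e. `p = q = 1`.
If `q = 0` the equation is `p² = (p - 2)(n + 1)`, so `p - 2 ∣ p² - (p - 2)(p + 2) = 4`,
leaving `p ∈ {3, 4, 6}`.
-/

theorem mul_dvd_of_sq_mul_dvd_sq {R : Type*} [CommMonoidWithZero R]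
    [UniqueFactorizationMonoid R] {a b u : R} (hb : Squarefree b) (h : a ^ 2 * b ∣ u ^ 2) :
    a * b ∣ u := by
  obtain ⟨w, rfl⟩ : a ∣ u :=
    (UniqueFactorizationMonoid.pow_dvd_pow_iff_dvd two_ne_zero).mp (dvd_of_mul_right_dvd h)
  rcases eq_or_ne a 0 with rfl | ha
  · simp
  rw [mul_pow, mul_dvd_mul_iff_left (pow_ne_zero 2 ha)] at h
  exact mul_dvd_mul_left a ((hb.dvd_pow_iff_dvd two_ne_zero).mp h)

namespace AnExtension

theorem eq_one_of_q_pos {p q n : ℕ} (hq0 : 0 < q) (hq : q ≤ p) (hpq : p + q ≤ n)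
    (h : ((p : ℤ) - q) ^ 2 = (p + q - 2) * (n + 1)) : p = 1 ∧ q = 1 := by
  by_contra hne
  have hs : (0 : ℤ) < p + q - 2 := by omega
  have hu : ((p : ℤ) - q) ^ 2 ≤ (p + q - 2) ^ 2 :=
    pow_le_pow_left₀ (by omega) (by omega) 2
  have hlt : ((p : ℤ) + q - 2) ^ 2 < (p + q - 2) * (n + 1) := by
    rw [sq]
    exact mul_lt_mul_of_pos_left (by omega) hs
  omega

theorem cases_of_q_eq_zero {p n : ℕ} (h : (p : ℤ) ^ 2 = (p - 2) * (n + 1)) :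
    (p = 3 ∧ n = 8) ∨ (p = 6 ∧ n = 8) ∨ (p = 4 ∧ n = 7) := by
  have hp : p ≤ 6 := by
    have hdvd : (p : ℤ) - 2 ∣ p ^ 2 - (p - 2) * (p + 2) :=
      dvd_sub ⟨n + 1, h⟩ (dvd_mul_right _ _)
    rw [show (p : ℤ) ^ 2 - (p - 2) * (p + 2) = 4 by ring] at hdvd
    linarith [Int.le_of_dvd four_pos hdvd]
  interval_cases p <;> omega

end AnExtension

/-- For nonnegative integers `p ≥ q` with `p + q ≤ n` satisfying
`(p−q)² − (p+q)(n+1) + 2(n+1) = 0`: writing `n+1 = a²b` with `b` squarefree, `p − q`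
is divisible by `ab`; and the complete list of solutions is `p = q = 1` (any `n`),
`(p,q,n) = (3,0,8)`, `(6,0,8)`, `(4,0,7)`. -/
theorem An_extension_diophantine (p q n : ℕ) (hq : q ≤ p) (hpq : p + q ≤ n)
    (heq : ((p : ℤ) - q) ^ 2 - ((p : ℤ) + q) * (n + 1) + 2 * (n + 1) = 0) :
    (∀ a b : ℕ, n + 1 = a ^ 2 * b → Squarefree b → ((a : ℤ) * b) ∣ ((p : ℤ) - q)) ∧
      ((p = 1 ∧ q = 1) ∨ (p = 3 ∧ q = 0 ∧ n = 8) ∨ (p = 6 ∧ q = 0 ∧ n = 8) ∨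
        (p = 4 ∧ q = 0 ∧ n = 7)) := by
  have hu : ((p : ℤ) - q) ^ 2 = (p + q - 2) * (n + 1) := by linear_combination heq
  refine ⟨fun a b hab hb => mul_dvd_of_sq_mul_dvd_sq (Int.squarefree_natCast.mpr hb) ?_, ?_⟩
  · have hab' : ((n : ℤ) + 1) = a ^ 2 * b := by exact_mod_cast hab
    exact hu ▸ hab' ▸ dvd_mul_left _ _
  · rcases Nat.eq_zero_or_pos q with rfl | hq0
    · right
      simpa using AnExtension.cases_of_q_eq_zero (by simpa using hu)
    · exact Or.inl (AnExtension.eq_one_of_q_pos hq0 hq hpq hu)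
end
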